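/- Fix a ≥ 0 and integer m ≥ 1. As b → 0⁺, Q_m(a,b) = 1 - (1/m!)(b²/2)^m e^{-a²/2} + O(b^{2m+2}); that is, (Q_m(a,b) - 1 + (1/m!)(b²/2)^m e^{-a²/2}) / b^{2m+2} is bounded near b = 0. -/

import Mathlib

/-- The lower incomplete gamma function Λ(s, x) = ∫₀ˣ t^(s-1) e^(-t) dt. -/
noncomputable def lowerIncGamma (s x : ℝ) : ℝ :=
  ∫ t in (0:ℝ)..x, t ^ (s - 1) * Real.exp (-t)

/-- The generalized Marcum-Q function of integer order `m`, defined via the lower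
incomplete gamma function, with Γ(m+i) = (m+i-1)!. -/
noncomputable def marcumQ (m : ℕ) (a b : ℝ) : ℝ :=
  1 - Real.exp (-a ^ 2 / 2) *
    ∑' i : ℕ, (1 / (i.factorial : ℝ)) *
      (lowerIncGamma (m + i) (b ^ 2 / 2) / ((m + i - 1).factorial : ℝ)) * (a ^ 2 / 2) ^ i

private lemma contInt (k : ℕ) (x : ℝ) :
    IntervalIntegrable (fun t : ℝ => t ^ k * Real.exp (-t)) MeasureTheory.volume 0 x :=
  (((continuous_pow k).mul (Real.continuous_exp.comp continuous_neg))).intervalIntegrable 0 x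

private lemma lig_eq (k : ℕ) (x : ℝ) :
    lowerIncGamma ((k + 1 : ℕ) : ℝ) x = ∫ t in (0:ℝ)..x, t ^ k * Real.exp (-t) := by
  unfold lowerIncGamma
  congr 1
  funext t
  rw [show ((k + 1 : ℕ) : ℝ) - 1 = ((k : ℕ) : ℝ) by push_cast; ring, Real.rpow_natCast]

private lemma lig_nonneg (k : ℕ) (x : ℝ) (hx : 0 ≤ x) :
    0 ≤ lowerIncGamma ((k + 1 : ℕ) : ℝ) x := by
  rw [lig_eq]
  apply intervalIntegral.integral_nonneg hx
  intro t ht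
  have : 0 ≤ t := ht.1
  positivity

private lemma lig_le (k : ℕ) (x : ℝ) (hx : 0 ≤ x) :
    lowerIncGamma ((k + 1 : ℕ) : ℝ) x ≤ x ^ (k + 1) / ((k : ℝ) + 1) := by
  rw [lig_eq]
  have h1 : (∫ t in (0:ℝ)..x, t ^ k) = x ^ (k + 1) / ((k : ℝ) + 1) := by
    rw [integral_pow]; push_cast; ring
  rw [← h1]
  apply intervalIntegral.integral_mono_on hx (contInt k x)
    ((continuous_pow k).intervalIntegrable 0 x)
  intro t ht
  have ht0 : 0 ≤ t := ht.1
  have hexp : Real.exp (-t) ≤ 1 := Real.exp_le_one_iff.2 (by linarith)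
  calc t ^ k * Real.exp (-t) ≤ t ^ k * 1 :=
        mul_le_mul_of_nonneg_left hexp (by positivity)
    _ = t ^ k := by ring

private lemma lig_ge (k : ℕ) (x : ℝ) (hx : 0 ≤ x) :
    x ^ (k + 1) / ((k : ℝ) + 1) - x ^ (k + 2) ≤ lowerIncGamma ((k + 1 : ℕ) : ℝ) x := by
  rw [lig_eq]
  have h1 : (∫ t in (0:ℝ)..x, (t ^ k - t ^ (k + 1)))
      = x ^ (k + 1) / ((k : ℝ) + 1) - x ^ (k + 2) / ((k : ℝ) + 2) := by
    rw [intervalIntegral.integral_sub ((continuous_pow k).intervalIntegrable 0 x)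
      ((continuous_pow (k+1)).intervalIntegrable 0 x), integral_pow, integral_pow]
    push_cast; ring
  have h2 : x ^ (k + 2) / ((k : ℝ) + 2) ≤ x ^ (k + 2) := by
    apply div_le_self (by positivity)
    have : (0 : ℝ) ≤ (k : ℝ) := Nat.cast_nonneg k
    linarith
  have h3 : x ^ (k + 1) / ((k : ℝ) + 1) - x ^ (k + 2)
      ≤ x ^ (k + 1) / ((k : ℝ) + 1) - x ^ (k + 2) / ((k : ℝ) + 2) := by linarith
  refine h3.trans ?_
  rw [← h1]
  apply intervalIntegral.integral_mono_on hx
    (((continuous_pow k).sub (continuous_pow (k+1))).intervalIntegrable 0 x)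
    (contInt k x)
  intro t ht
  have ht0 : 0 ≤ t := ht.1
  have hexp : 1 - t ≤ Real.exp (-t) := by
    have := Real.add_one_le_exp (-t); linarith
  calc t ^ k - t ^ (k + 1) = t ^ k * (1 - t) := by ring
    _ ≤ t ^ k * Real.exp (-t) := mul_le_mul_of_nonneg_left hexp (by positivity)

theorem marcumQ_asymptotic (m : ℕ) (hm : 1 ≤ m) (a : ℝ) (ha : 0 ≤ a) :
    ∃ C ε : ℝ, 0 < C ∧ 0 < ε ∧ ∀ b : ℝ, 0 < b → b < ε →
      |marcumQ m a b -
          (1 - (1 / (m.factorial : ℝ)) * (b ^ 2 / 2) ^ m * Real.exp (-a ^ 2 / 2))| ≤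
        C * b ^ (2 * m + 2) := by
  obtain ⟨k, rfl⟩ : ∃ k, m = k + 1 := ⟨m - 1, (Nat.succ_pred_eq_of_pos hm).symm⟩
  have hE : Summable (fun j : ℕ => (a ^ 2 / 2) ^ j / (j.factorial : ℝ)) :=
    Real.summable_pow_div_factorial _
  set E : ℝ := ∑' j : ℕ, (a ^ 2 / 2) ^ j / (j.factorial : ℝ) with hEdef
  have hEnn : 0 ≤ E := tsum_nonneg (fun j => by positivity)
  refine ⟨1 + E, 1, by linarith, one_pos, ?_⟩
  intro b hb hb1
  set x : ℝ := b ^ 2 / 2 with hxdef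
  have hx0 : 0 < x := by positivity
  have hx1 : x ≤ 1 := by
    have hb2 : b ^ 2 ≤ 1 := by nlinarith
    rw [hxdef]; linarith
  set f : ℕ → ℝ := fun i => (1 / (i.factorial : ℝ)) *
      (lowerIncGamma (((k + 1 + i : ℕ)) : ℝ) x / (((k + 1 + i - 1).factorial : ℝ))) *
      (a ^ 2 / 2) ^ i
    with hfdef
  have hfact_ge : ∀ n : ℕ, (1 : ℝ) ≤ (n.factorial : ℝ) := fun n => by
    exact_mod_cast Nat.one_le_iff_ne_zero.2 (Nat.factorial_ne_zero n)
  have hmi : ∀ i : ℕ, k + 1 + i = (k + i) + 1 := fun i => by omega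
  have hlig_nonneg : ∀ i : ℕ, 0 ≤ lowerIncGamma (((k + 1 + i : ℕ)) : ℝ) x := by
    intro i; rw [hmi i]; exact lig_nonneg _ _ hx0.le
  have hf_nonneg : ∀ i, 0 ≤ f i := by
    intro i
    have h1 := hlig_nonneg i
    have h2 := hfact_ge (k + 1 + i - 1).factorial
    have h3 : (0:ℝ) < ((k + 1 + i - 1).factorial : ℝ) := by positivity
    simp only [hfdef]
    positivity
  have hlig_le : ∀ i : ℕ, lowerIncGamma (((k + 1 + i : ℕ)) : ℝ) x ≤ x ^ (k + 1 + i) := by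
    intro i
    rw [hmi i]
    refine (lig_le (k + i) x hx0.le).trans ?_
    rw [← hmi i]
    refine (div_le_self (by positivity) ?_)
    have : (0 : ℝ) ≤ ((k : ℝ) + (i : ℝ)) := by positivity
    linarith
  have hf_le : ∀ i, f i ≤ x ^ (k + 1 + i) * ((a ^ 2 / 2) ^ i / (i.factorial : ℝ)) := by
    intro i
    have hdiv : lowerIncGamma (((k + 1 + i : ℕ)) : ℝ) x / (((k + 1 + i - 1).factorial : ℝ))
        ≤ x ^ (k + 1 + i) :=
      (div_le_self (hlig_nonneg i) (hfact_ge _)).trans (hlig_le i)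
    simp only [hfdef]
    calc (1 / (i.factorial : ℝ)) *
          (lowerIncGamma (((k + 1 + i : ℕ)) : ℝ) x / (((k + 1 + i - 1).factorial : ℝ))) *
          (a ^ 2 / 2) ^ i
        ≤ (1 / (i.factorial : ℝ)) * x ^ (k + 1 + i) * (a ^ 2 / 2) ^ i :=
          mul_le_mul_of_nonneg_right
            (mul_le_mul_of_nonneg_left hdiv (by positivity)) (by positivity)
      _ = x ^ (k + 1 + i) * ((a ^ 2 / 2) ^ i / (i.factorial : ℝ)) := by ring
  have hg_sum : Summable
      (fun i : ℕ => x ^ (k + 1 + i) * ((a ^ 2 / 2) ^ i / (i.factorial : ℝ))) := by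
    have heq : (fun i : ℕ => x ^ (k + 1 + i) * ((a ^ 2 / 2) ^ i / (i.factorial : ℝ)))
        = fun i : ℕ => x ^ (k + 1) * ((x * (a ^ 2 / 2)) ^ i / (i.factorial : ℝ)) := by
      funext i; rw [pow_add, mul_pow]; ring
    rw [heq]
    exact (Real.summable_pow_div_factorial _).mul_left _
  have hf_sum : Summable f := Summable.of_nonneg_of_le hf_nonneg hf_le hg_sum
  have hsplit : ∑' i, f i = f 0 + ∑' i, f (i + 1) := Summable.tsum_eq_zero_add hf_sum
  -- bound the head term deviation
  have hfc : (((k + 1).factorial : ℝ)) = ((k : ℝ) + 1) * (k.factorial : ℝ) := by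
    rw [Nat.factorial_succ]; push_cast; ring
  have hhead : |f 0 - x ^ (k + 1) / (((k + 1).factorial : ℝ))| ≤ x ^ (k + 2) := by
    have hf0 : f 0 = lowerIncGamma (((k + 1 : ℕ)) : ℝ) x / ((k.factorial : ℝ)) := by
      simp [hfdef]
    have hub := lig_le k x hx0.le
    have hlb := lig_ge k x hx0.le
    have habs : |lowerIncGamma (((k + 1 : ℕ)) : ℝ) x - x ^ (k + 1) / ((k : ℝ) + 1)|
        ≤ x ^ (k + 2) := by
      rw [abs_le]
      constructor
      · linarith
      · have hpos : (0:ℝ) ≤ x ^ (k + 2) := by positivity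
        linarith
    have hk1 : (1 : ℝ) ≤ (k.factorial : ℝ) := hfact_ge k
    have hkf : (0 : ℝ) < (k.factorial : ℝ) := by linarith
    have heq : f 0 - x ^ (k + 1) / (((k + 1).factorial : ℝ))
        = (lowerIncGamma (((k + 1 : ℕ)) : ℝ) x - x ^ (k + 1) / ((k : ℝ) + 1))
          / (k.factorial : ℝ) := by
      rw [hf0, hfc]
      have hk0 : ((k : ℝ) + 1) ≠ 0 := by positivity
      field_simp
    rw [heq, abs_div, abs_of_pos hkf]
    calc |lowerIncGamma (((k + 1 : ℕ)) : ℝ) x - x ^ (k + 1) / ((k : ℝ) + 1)|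
          / (k.factorial : ℝ)
        ≤ |lowerIncGamma (((k + 1 : ℕ)) : ℝ) x - x ^ (k + 1) / ((k : ℝ) + 1)| :=
          div_le_self (abs_nonneg _) hk1
      _ ≤ x ^ (k + 2) := habs
  -- bound the tail
  have hftail_le : ∀ i : ℕ, f (i + 1)
      ≤ x ^ (k + 2) * ((a ^ 2 / 2) ^ (i + 1) / ((i + 1).factorial : ℝ)) := by
    intro i
    refine (hf_le (i + 1)).trans ?_
    have hxp : x ^ (k + 1 + (i + 1)) ≤ x ^ (k + 2) :=
      pow_le_pow_of_le_one hx0.le hx1 (by omega)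
    exact mul_le_mul_of_nonneg_right hxp (by positivity)
  have htail_sum : Summable fun i : ℕ => f (i + 1) := (summable_nat_add_iff 1).2 hf_sum
  have hgsum' : Summable fun i : ℕ =>
      x ^ (k + 2) * ((a ^ 2 / 2) ^ (i + 1) / ((i + 1).factorial : ℝ)) :=
    ((summable_nat_add_iff 1).2 hE).mul_left _
  have hEsplit : E = 1 + ∑' i : ℕ, (a ^ 2 / 2) ^ (i + 1) / ((i + 1).factorial : ℝ) := by
    rw [hEdef, Summable.tsum_eq_zero_add hE]
    norm_num
  have htail : ∑' i, f (i + 1) ≤ x ^ (k + 2) * E := by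
    calc ∑' i, f (i + 1)
        ≤ ∑' i : ℕ, x ^ (k + 2) * ((a ^ 2 / 2) ^ (i + 1) / ((i + 1).factorial : ℝ)) :=
          Summable.tsum_le_tsum hftail_le htail_sum hgsum'
      _ = x ^ (k + 2) * ∑' i : ℕ, (a ^ 2 / 2) ^ (i + 1) / ((i + 1).factorial : ℝ) :=
          tsum_mul_left
      _ ≤ x ^ (k + 2) * E := by
          have h1 : ∑' i : ℕ, (a ^ 2 / 2) ^ (i + 1) / ((i + 1).factorial : ℝ) ≤ E := by
            rw [hEsplit]; linarith
          exact mul_le_mul_of_nonneg_left h1 (by positivity)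
  have htail_nonneg : 0 ≤ ∑' i, f (i + 1) :=
    tsum_nonneg fun i => hf_nonneg (i + 1)
  -- combine
  have key : |(∑' i, f i) - x ^ (k + 1) / (((k + 1).factorial : ℝ))| ≤ (1 + E) * x ^ (k + 2) := by
    rw [hsplit]
    calc |f 0 + (∑' i, f (i + 1)) - x ^ (k + 1) / (((k + 1).factorial : ℝ))|
        ≤ |f 0 - x ^ (k + 1) / (((k + 1).factorial : ℝ))| + |∑' i, f (i + 1)| := by
          have := abs_add_le (f 0 - x ^ (k + 1) / (((k + 1).factorial : ℝ))) (∑' i, f (i + 1))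
          rw [show f 0 + (∑' i, f (i + 1)) - x ^ (k + 1) / (((k + 1).factorial : ℝ))
              = (f 0 - x ^ (k + 1) / (((k + 1).factorial : ℝ))) + ∑' i, f (i + 1) from by ring]
          exact this
      _ ≤ x ^ (k + 2) + x ^ (k + 2) * E := by
          have h2 : |∑' i, f (i + 1)| = ∑' i, f (i + 1) := abs_of_nonneg htail_nonneg
          rw [h2]
          exact add_le_add hhead htail
      _ = (1 + E) * x ^ (k + 2) := by ring
  -- rewrite the goal
  have hS : (∑' i : ℕ, (1 / (i.factorial : ℝ)) *
        (lowerIncGamma ((k + 1 : ℕ) + i) (b ^ 2 / 2) / (((k + 1) + i - 1).factorial : ℝ)) *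
        (a ^ 2 / 2) ^ i) = ∑' i, f i := by
    apply tsum_congr
    intro i
    simp only [hfdef, hxdef]
    norm_cast
  have hgoal_eq : marcumQ (k + 1) a b -
      (1 - (1 / (((k + 1).factorial : ℝ))) * x ^ (k + 1) * Real.exp (-a ^ 2 / 2))
      = Real.exp (-a ^ 2 / 2) * (x ^ (k + 1) / (((k + 1).factorial : ℝ)) - ∑' i, f i) := by
    unfold marcumQ
    rw [hS]
    ring
  have hexp1 : Real.exp (-a ^ 2 / 2) ≤ 1 := by
    apply Real.exp_le_one_iff.2
    have : (0:ℝ) ≤ a ^ 2 / 2 := by positivity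
    linarith
  have hxb : x ^ (k + 2) ≤ b ^ (2 * (k + 1) + 2) := by
    have h1 : x ≤ b ^ 2 := by
      rw [hxdef]
      have : (0:ℝ) ≤ b ^ 2 := by positivity
      linarith
    calc x ^ (k + 2) ≤ (b ^ 2) ^ (k + 2) := pow_le_pow_left₀ hx0.le h1 (k + 2)
      _ = b ^ (2 * (k + 1) + 2) := by rw [← pow_mul]; ring_nf
  rw [hgoal_eq, abs_mul, abs_of_nonneg (Real.exp_nonneg _), abs_sub_comm]
  calc Real.exp (-a ^ 2 / 2) * |(∑' i, f i) - x ^ (k + 1) / (((k + 1).factorial : ℝ))|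
      ≤ 1 * |(∑' i, f i) - x ^ (k + 1) / (((k + 1).factorial : ℝ))| :=
        mul_le_mul_of_nonneg_right hexp1 (abs_nonneg _)
    _ = |(∑' i, f i) - x ^ (k + 1) / (((k + 1).factorial : ℝ))| := one_mul _
    _ ≤ (1 + E) * x ^ (k + 2) := key
    _ ≤ (1 + E) * b ^ (2 * (k + 1) + 2) :=
        mul_le_mul_of_nonneg_left hxb (by linarith)
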